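/- arXiv:1211.5449 — 4 statements merged into one kernel-verified Lean document; each statement's English description precedes it below -/
import Mathlib

section
/- Let q ∈ K. The pairing ⟨−,−⟩_q on plane posets, defined by ⟨P,Q⟩_q = q^{φ(P,Q)} if ι(P) ≤ Q and 0 otherwise, is symmetric (⟨P,Q⟩_q = ⟨Q,P⟩_q for all plane posets P, Q), and it satisfies the Hopf compatibility with the composition product and the coproduct Δ_q: for all plane posets P, Q, R, ⟨PQ, R⟩_q = Σ over biideals I of R of q^{h_{R∖I}^{I}} ⟨P, R∖I⟩_q ⟨Q, I⟩_q. -/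
open scoped TensorProduct
open scoped Classical

noncomputable section

/-- A plane poset structure on a set `α`: two partial orders `≤_h` (`hle`) and `≤_r` (`rle`)
such that two distinct elements are comparable for `≤_h` if and only if they are not
comparable for `≤_r`. -/
structure PlanePoset (α : Type) where
  hle : α → α → Prop
  rle : α → α → Prop
  hle_refl : ∀ x, hle x x
  hle_antisymm : ∀ x y, hle x y → hle y x → x = y
  hle_trans : ∀ x y z, hle x y → hle y z → hle x z
  rle_refl : ∀ x, rle x x
  rle_antisymm : ∀ x y, rle x y → rle y x → x = y
  rle_trans : ∀ x y z, rle x y → rle y z → rle x z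
  compat : ∀ x y, x ≠ y → ((hle x y ∨ hle y x) ↔ ¬ (rle x y ∨ rle y x))

namespace PlanePoset

variable {α β : Type}

/-- The induced (total) order `x ≤ y iff x ≤_h y or x ≤_r y`. -/
def tle (P : PlanePoset α) (x y : α) : Prop := P.hle x y ∨ P.rle x y

/-- Transport of a plane poset structure along a bijection. -/
def map (e : α ≃ β) (P : PlanePoset α) : PlanePoset β where
  hle x y := P.hle (e.symm x) (e.symm y)
  rle x y := P.rle (e.symm x) (e.symm y)
  hle_refl x := P.hle_refl _
  hle_antisymm x y h1 h2 := e.symm.injective (P.hle_antisymm _ _ h1 h2)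
  hle_trans x y z h1 h2 := P.hle_trans _ _ _ h1 h2
  rle_refl x := P.rle_refl _
  rle_antisymm x y h1 h2 := e.symm.injective (P.rle_antisymm _ _ h1 h2)
  rle_trans x y z h1 h2 := P.rle_trans _ _ _ h1 h2
  compat x y hxy := P.compat _ _ fun h => hxy (e.symm.injective h)

@[simp] theorem map_hle (e : α ≃ β) (P : PlanePoset α) (x y : β) :
    (P.map e).hle x y ↔ P.hle (e.symm x) (e.symm y) := Iff.rfl

@[simp] theorem map_rle (e : α ≃ β) (P : PlanePoset α) (x y : β) :
    (P.map e).rle x y ↔ P.rle (e.symm x) (e.symm y) := Iff.rfl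

/-- The composition `PQ` of two plane posets: `x ≤_r y` for every `x ∈ P`, `y ∈ Q`. -/
def comp (P : PlanePoset α) (Q : PlanePoset β) : PlanePoset (α ⊕ β) where
  hle x y :=
    match x, y with
    | Sum.inl a, Sum.inl b => P.hle a b
    | Sum.inr a, Sum.inr b => Q.hle a b
    | _, _ => False
  rle x y :=
    match x, y with
    | Sum.inl a, Sum.inl b => P.rle a b
    | Sum.inr a, Sum.inr b => Q.rle a b
    | Sum.inl _, Sum.inr _ => True
    | Sum.inr _, Sum.inl _ => False
  hle_refl := by
    rintro (a | a)
    · exact P.hle_refl a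
    · exact Q.hle_refl a
  hle_antisymm := by
    rintro (a | a) (b | b) h1 h2
    · exact congrArg Sum.inl (P.hle_antisymm a b h1 h2)
    · exact h1.elim
    · exact h1.elim
    · exact congrArg Sum.inr (Q.hle_antisymm a b h1 h2)
  hle_trans := by
    rintro (a | a) (b | b) (c | c) h1 h2 <;>
      first
        | exact P.hle_trans _ _ _ h1 h2
        | exact Q.hle_trans _ _ _ h1 h2
        | exact h1.elim
        | exact h2.elim
  rle_refl := by
    rintro (a | a)
    · exact P.rle_refl a
    · exact Q.rle_refl a
  rle_antisymm := by
    rintro (a | a) (b | b) h1 h2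
    · exact congrArg Sum.inl (P.rle_antisymm a b h1 h2)
    · exact h2.elim
    · exact h1.elim
    · exact congrArg Sum.inr (Q.rle_antisymm a b h1 h2)
  rle_trans := by
    rintro (a | a) (b | b) (c | c) h1 h2 <;>
      first
        | exact P.rle_trans _ _ _ h1 h2
        | exact Q.rle_trans _ _ _ h1 h2
        | exact h1.elim
        | exact h2.elim
        | trivial
  compat := by
    rintro (a | a) (b | b) hne
    · exact P.compat a b fun h => hne (congrArg Sum.inl h)
    · show (False ∨ False) ↔ ¬ (True ∨ False)
      simp
    · show (False ∨ False) ↔ ¬ (False ∨ True)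
      simp
    · exact Q.compat a b fun h => hne (congrArg Sum.inr h)

/-- The product `P ▷ Q` of two plane posets: `x ≤_h y` for every `x ∈ P`, `y ∈ Q`. -/
def hcomp (P : PlanePoset α) (Q : PlanePoset β) : PlanePoset (α ⊕ β) where
  hle x y :=
    match x, y with
    | Sum.inl a, Sum.inl b => P.hle a b
    | Sum.inr a, Sum.inr b => Q.hle a b
    | Sum.inl _, Sum.inr _ => True
    | Sum.inr _, Sum.inl _ => False
  rle x y :=
    match x, y with
    | Sum.inl a, Sum.inl b => P.rle a b
    | Sum.inr a, Sum.inr b => Q.rle a b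
    | _, _ => False
  hle_refl := by
    rintro (a | a)
    · exact P.hle_refl a
    · exact Q.hle_refl a
  hle_antisymm := by
    rintro (a | a) (b | b) h1 h2
    · exact congrArg Sum.inl (P.hle_antisymm a b h1 h2)
    · exact h2.elim
    · exact h1.elim
    · exact congrArg Sum.inr (Q.hle_antisymm a b h1 h2)
  hle_trans := by
    rintro (a | a) (b | b) (c | c) h1 h2 <;>
      first
        | exact P.hle_trans _ _ _ h1 h2
        | exact Q.hle_trans _ _ _ h1 h2
        | exact h1.elim
        | exact h2.elim
        | trivial
  rle_refl := by
    rintro (a | a)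
    · exact P.rle_refl a
    · exact Q.rle_refl a
  rle_antisymm := by
    rintro (a | a) (b | b) h1 h2
    · exact congrArg Sum.inl (P.rle_antisymm a b h1 h2)
    · exact h1.elim
    · exact h1.elim
    · exact congrArg Sum.inr (Q.rle_antisymm a b h1 h2)
  rle_trans := by
    rintro (a | a) (b | b) (c | c) h1 h2 <;>
      first
        | exact P.rle_trans _ _ _ h1 h2
        | exact Q.rle_trans _ _ _ h1 h2
        | exact h1.elim
        | exact h2.elim
  compat := by
    rintro (a | a) (b | b) hne
    · exact P.compat a b fun h => hne (congrArg Sum.inl h)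
    · show (True ∨ False) ↔ ¬ (False ∨ False)
      simp
    · show (False ∨ True) ↔ ¬ (False ∨ False)
      simp
    · exact Q.compat a b fun h => hne (congrArg Sum.inr h)

/-- Restriction of a plane poset to a subset (a plane subposet). -/
def res (P : PlanePoset α) (s : Finset α) : PlanePoset {x : α // x ∈ s} where
  hle x y := P.hle x.1 y.1
  rle x y := P.rle x.1 y.1
  hle_refl x := P.hle_refl _
  hle_antisymm x y h1 h2 := Subtype.ext (P.hle_antisymm _ _ h1 h2)
  hle_trans x y z h1 h2 := P.hle_trans _ _ _ h1 h2
  rle_refl x := P.rle_refl _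
  rle_antisymm x y h1 h2 := Subtype.ext (P.rle_antisymm _ _ h1 h2)
  rle_trans x y z h1 h2 := P.rle_trans _ _ _ h1 h2
  compat x y hxy := P.compat _ _ fun h => hxy (Subtype.ext h)

/-- The involution `ι` exchanging the two partial orders. -/
def swap (P : PlanePoset α) : PlanePoset α where
  hle := P.rle
  rle := P.hle
  hle_refl := P.rle_refl
  hle_antisymm := P.rle_antisymm
  hle_trans := P.rle_trans
  rle_refl := P.hle_refl
  rle_antisymm := P.hle_antisymm
  rle_trans := P.hle_trans
  compat x y hxy := by
    have h := P.compat x y hxy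
    tauto

end PlanePoset

/-- A plane poset structure on `Fin n` is canonical when the induced total order
is the usual order on `{1, …, n}`. -/
def IsCanon {n : ℕ} (P : PlanePoset (Fin n)) : Prop :=
  ∀ x y : Fin n, (P.hle x y ∨ P.rle x y) ↔ x ≤ y

/-- `PP(n)`: (isoclasses of) plane posets of cardinality `n`, realized as the canonical
plane poset structures on `{1, …, n}`. -/
def CanonPP (n : ℕ) : Type := { P : PlanePoset (Fin n) // IsCanon P }

namespace CanonPP

/-- The empty plane poset, unit of both products. -/
def one : CanonPP 0 :=
  ⟨{ hle := fun _ _ => True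
     rle := fun _ _ => True
     hle_refl := fun _ => trivial
     hle_antisymm := fun x => x.elim0
     hle_trans := fun _ _ _ _ _ => trivial
     rle_refl := fun _ => trivial
     rle_antisymm := fun x => x.elim0
     rle_trans := fun _ _ _ _ _ => trivial
     compat := fun x => x.elim0 }, fun x => x.elim0⟩

/-- The composition `PQ` of plane posets, realized canonically. -/
def comp {k l : ℕ} (P : CanonPP k) (Q : CanonPP l) : CanonPP (k + l) :=
  ⟨(P.1.comp Q.1).map finSumFinEquiv, by
    intro x y
    obtain ⟨a, rfl⟩ := finSumFinEquiv.surjective x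
    obtain ⟨b, rfl⟩ := finSumFinEquiv.surjective y
    simp only [PlanePoset.map_hle, PlanePoset.map_rle, Equiv.symm_apply_apply]
    rcases a with a | a <;> rcases b with b | b
    · show (P.1.hle a b ∨ P.1.rle a b) ↔ _
      rw [P.2 a b, finSumFinEquiv_apply_left, finSumFinEquiv_apply_left]
      simp only [Fin.le_def, Fin.coe_castAdd]
      try omega
    · show (False ∨ True) ↔ _
      rw [finSumFinEquiv_apply_left, finSumFinEquiv_apply_right]
      have ha := a.isLt
      simp only [false_or, true_iff, Fin.le_def, Fin.coe_castAdd, Fin.coe_natAdd]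
      omega
    · show (False ∨ False) ↔ _
      rw [finSumFinEquiv_apply_right, finSumFinEquiv_apply_left]
      have hb := b.isLt
      simp only [or_self, false_iff, Fin.le_def, Fin.coe_natAdd, Fin.coe_castAdd]
      omega
    · show (Q.1.hle a b ∨ Q.1.rle a b) ↔ _
      rw [Q.2 a b, finSumFinEquiv_apply_right, finSumFinEquiv_apply_right]
      simp only [Fin.le_def, Fin.coe_natAdd]
      omega⟩

/-- The product `P ▷ Q` of plane posets, realized canonically. -/
def hcomp {k l : ℕ} (P : CanonPP k) (Q : CanonPP l) : CanonPP (k + l) :=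
  ⟨(P.1.hcomp Q.1).map finSumFinEquiv, by
    intro x y
    obtain ⟨a, rfl⟩ := finSumFinEquiv.surjective x
    obtain ⟨b, rfl⟩ := finSumFinEquiv.surjective y
    simp only [PlanePoset.map_hle, PlanePoset.map_rle, Equiv.symm_apply_apply]
    rcases a with a | a <;> rcases b with b | b
    · show (P.1.hle a b ∨ P.1.rle a b) ↔ _
      rw [P.2 a b, finSumFinEquiv_apply_left, finSumFinEquiv_apply_left]
      simp only [Fin.le_def, Fin.coe_castAdd]
      try omega
    · show (True ∨ False) ↔ _
      rw [finSumFinEquiv_apply_left, finSumFinEquiv_apply_right]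
      have ha := a.isLt
      simp only [or_false, true_iff, Fin.le_def, Fin.coe_castAdd, Fin.coe_natAdd]
      omega
    · show (False ∨ False) ↔ _
      rw [finSumFinEquiv_apply_right, finSumFinEquiv_apply_left]
      have hb := b.isLt
      simp only [or_self, false_iff, Fin.le_def, Fin.coe_natAdd, Fin.coe_castAdd]
      omega
    · show (Q.1.hle a b ∨ Q.1.rle a b) ↔ _
      rw [Q.2 a b, finSumFinEquiv_apply_right, finSumFinEquiv_apply_right]
      simp only [Fin.le_def, Fin.coe_natAdd]
      omega⟩

/-- Restriction of a plane poset to a plane subposet, realized canonically via the unique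
increasing bijection. -/
def restrict {n : ℕ} (P : CanonPP n) (s : Finset (Fin n)) : CanonPP s.card :=
  ⟨(P.1.res s).map (s.orderIsoOfFin rfl).toEquiv.symm, by
    intro i j
    simp only [PlanePoset.map_hle, PlanePoset.map_rle, Equiv.symm_symm]
    show (P.1.hle ((s.orderIsoOfFin rfl).toEquiv i).1 ((s.orderIsoOfFin rfl).toEquiv j).1 ∨
          P.1.rle ((s.orderIsoOfFin rfl).toEquiv i).1 ((s.orderIsoOfFin rfl).toEquiv j).1) ↔ i ≤ j
    rw [P.2]
    rw [Subtype.coe_le_coe]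
    exact (s.orderIsoOfFin rfl).le_iff_le⟩

/-- The involution `ι`, on canonical plane posets. -/
def iota {n : ℕ} (P : CanonPP n) : CanonPP n :=
  ⟨P.1.swap, fun x y => by rw [or_comm]; exact P.2 x y⟩

end CanonPP

/-- The partial (weak Bruhat) order on `PP(n)`: `P ≤ Q` iff `x ≤_h y` in `Q` implies
`x ≤_h y` in `P` (the increasing bijection between canonical representatives being
the identity). -/
def PPle {n : ℕ} (P Q : CanonPP n) : Prop :=
  ∀ x y : Fin n, Q.1.hle x y → P.1.hle x y

/-- Strict version of the order on `PP(n)`. -/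
def PPlt {n : ℕ} (P Q : CanonPP n) : Prop := PPle P Q ∧ P ≠ Q

/-- Covering relation of the poset `(PP(n), ≤)`. -/
def PPcovBy {n : ℕ} (P Q : CanonPP n) : Prop :=
  PPlt P Q ∧ ∀ T : CanonPP n, PPlt P T → ¬ PPlt T Q

/-- `E(P) = {(i,j) | i <_h j}`. -/
def Eset {n : ℕ} (P : CanonPP n) : Set (Fin n × Fin n) :=
  {p | P.1.hle p.1 p.2 ∧ p.1 ≠ p.2}

/-- A biideal of a plane poset: an ideal for both partial orders, equivalently an ideal
for the induced total order. -/
def IsBiideal {n : ℕ} (P : CanonPP n) (I : Finset (Fin n)) : Prop :=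
  ∀ x y : Fin n, x ∈ I → (P.1.hle x y ∨ P.1.rle x y) → y ∈ I

/-- `h_s^t = #{(x,y) ∈ s × t | x <_h y}`. -/
def hNum {n : ℕ} (P : CanonPP n) (s t : Finset (Fin n)) : ℕ :=
  ((s ×ˢ t).filter (fun p : Fin n × Fin n => P.1.hle p.1 p.2 ∧ p.1 ≠ p.2)).card

/-- `φ(P,Q) = #{(x,y) | x <_r y in P and x <_h y in Q} + #{(x,y) | x <_h y in P and
x <_r y in Q}` (via the identity increasing bijection). -/
def phi {n : ℕ} (P Q : CanonPP n) : ℕ :=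
  (Finset.univ.filter (fun p : Fin n × Fin n =>
      (P.1.rle p.1 p.2 ∧ p.1 ≠ p.2) ∧ (Q.1.hle p.1 p.2 ∧ p.1 ≠ p.2))).card +
  (Finset.univ.filter (fun p : Fin n × Fin n =>
      (P.1.hle p.1 p.2 ∧ p.1 ≠ p.2) ∧ (Q.1.rle p.1 p.2 ∧ p.1 ≠ p.2))).card

/-- The level `ℓ(P) = #{(x,y) | x <_r y}`. -/
def level {n : ℕ} (P : CanonPP n) : ℕ :=
  (Finset.univ.filter (fun p : Fin n × Fin n => P.1.rle p.1 p.2 ∧ p.1 ≠ p.2)).card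

/-- The plane poset `P_σ = Ψ_n(σ)` associated to a permutation `σ`. -/
def PsiPerm {n : ℕ} (σ : Equiv.Perm (Fin n)) : CanonPP n :=
  ⟨{ hle := fun i j => i ≤ j ∧ σ.symm i ≤ σ.symm j
     rle := fun i j => i ≤ j ∧ σ.symm j ≤ σ.symm i
     hle_refl := fun x => ⟨le_refl x, le_refl _⟩
     hle_antisymm := fun x y h1 h2 => le_antisymm h1.1 h2.1
     hle_trans := fun x y z h1 h2 => ⟨le_trans h1.1 h2.1, le_trans h1.2 h2.2⟩
     rle_refl := fun x => ⟨le_refl x, le_refl _⟩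
     rle_antisymm := fun x y h1 h2 => le_antisymm h1.1 h2.1
     rle_trans := fun x y z h1 h2 => ⟨le_trans h1.1 h2.1, le_trans h2.2 h1.2⟩
     compat := by
       intro x y hxy
       have h1 : (x : ℕ) ≠ (y : ℕ) := fun h => hxy (Fin.ext h)
       have h2 : ((σ.symm x : Fin n) : ℕ) ≠ ((σ.symm y : Fin n) : ℕ) :=
         fun h => hxy (σ.symm.injective (Fin.ext h))
       simp only [Fin.le_def]
       omega },
   by
     intro x y
     show ((x ≤ y ∧ σ.symm x ≤ σ.symm y) ∨ (x ≤ y ∧ σ.symm y ≤ σ.symm x)) ↔ x ≤ y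
     simp only [Fin.le_def]
     omega⟩

/-- One step of the weak Bruhat order: exchange two consecutive letters `i < j`
(`i` appearing immediately before `j`) in the word `σ(1) ⋯ σ(n)`. -/
def bruhatStep {n : ℕ} (σ τ : Equiv.Perm (Fin n)) : Prop :=
  ∃ (i j k : Fin n) (hk : (k : ℕ) + 1 < n),
    i < j ∧ σ k = i ∧ σ ⟨(k : ℕ) + 1, hk⟩ = j ∧ τ = Equiv.swap i j * σ

/-- The set of (isoclasses of) plane posets. -/
abbrev PPS : Type := Σ n : ℕ, CanonPP n

/-- Composition product on plane posets. -/
def PPS.comp (P Q : PPS) : PPS := ⟨P.1 + Q.1, P.2.comp Q.2⟩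

/-- The product `▷` on plane posets. -/
def PPS.hcomp (P Q : PPS) : PPS := ⟨P.1 + Q.1, P.2.hcomp Q.2⟩

/-- Value of the coproduct `Δ_q` on a plane poset:
`Δ_q(P) = Σ_{I biideal of P} q^{h_{P∖I}^I} (P∖I) ⊗ I`. -/
def deltaOn (K : Type) [Field K] (q : K) {n : ℕ} (P : CanonPP n) :
    (PPS →₀ K) ⊗[K] (PPS →₀ K) :=
  ∑ I ∈ Finset.univ.filter (fun I : Finset (Fin n) => IsBiideal P I),
    q ^ hNum P Iᶜ I •
      (Finsupp.single (⟨Iᶜ.card, P.restrict Iᶜ⟩ : PPS) (1 : K) ⊗ₜ[K]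
        Finsupp.single (⟨I.card, P.restrict I⟩ : PPS) (1 : K))

/-- The coproduct `Δ_q` on `h_PP`, extended linearly. -/
def Delta (K : Type) [Field K] (q : K) :
    (PPS →₀ K) →ₗ[K] (PPS →₀ K) ⊗[K] (PPS →₀ K) :=
  Finsupp.lift _ K PPS fun P => deltaOn K q P.2

/-- The composition product `m`, extended bilinearly to `h_PP`. -/
def mulPP (K : Type) [Field K] : (PPS →₀ K) →ₗ[K] (PPS →₀ K) →ₗ[K] (PPS →₀ K) :=
  Finsupp.lift _ K PPS fun P =>
    Finsupp.lift _ K PPS fun Q => Finsupp.single (PPS.comp P Q) 1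

/-- The componentwise product on `h_PP ⊗ h_PP`. -/
def mulT (K : Type) [Field K] :
    ((PPS →₀ K) ⊗[K] (PPS →₀ K)) →ₗ[K] ((PPS →₀ K) ⊗[K] (PPS →₀ K)) →ₗ[K]
      ((PPS →₀ K) ⊗[K] (PPS →₀ K)) :=
  TensorProduct.map₂ (mulPP K) (mulPP K)

/-- Multiplication of the basis element of a plane poset by `q^{n·c}` where `n` is its
cardinality. -/
def scale (K : Type) [Field K] (q : K) (c : ℕ) : (PPS →₀ K) →ₗ[K] (PPS →₀ K) :=
  Finsupp.lift _ K PPS fun P => q ^ (P.1 * c) • Finsupp.single P 1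

/-- Right multiplication by a plane poset for the product `▷`. -/
def rmulH (K : Type) [Field K] (Q : PPS) : (PPS →₀ K) →ₗ[K] (PPS →₀ K) :=
  Finsupp.lift _ K PPS fun P => Finsupp.single (PPS.hcomp P Q) 1

/-- Left multiplication by a plane poset for the product `▷`. -/
def lmulH (K : Type) [Field K] (P : PPS) : (PPS →₀ K) →ₗ[K] (PPS →₀ K) :=
  Finsupp.lift _ K PPS fun Q => Finsupp.single (PPS.hcomp P Q) 1

/-- The pairing on plane posets of the same cardinality:
`⟨P,Q⟩_q = q^{φ(P,Q)}` if `ι(P) ≤ Q`, and `0` otherwise. -/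
def pairN (K : Type) [Field K] (q : K) {n : ℕ} (P Q : CanonPP n) : K :=
  if PPle (CanonPP.iota P) Q then q ^ phi P Q else 0

/-- The pairing `⟨-,-⟩_q` on plane posets (zero on posets of different cardinalities). -/
def pairPP (K : Type) [Field K] (q : K) (P Q : PPS) : K :=
  if h : P.1 = Q.1 then pairN K q (cast (congrArg CanonPP h) P.2) Q.2 else 0

/-- The pairing `⟨-,-⟩_q`, extended bilinearly to `h_PP`. -/
def Bform (K : Type) [Field K] (q : K) : (PPS →₀ K) →ₗ[K] (PPS →₀ K) →ₗ[K] K :=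
  Finsupp.lift _ K PPS fun P => Finsupp.lift K K PPS fun Q => pairPP K q P Q

end

/-! The biideals of a plane poset `R` are the final segments of its total order, so at most one of
them, the block `I` of the last `|Q|` elements, pairs nontrivially with `Q`. For that `I`, since
`R` never puts an element of `I` `h`-below one of `R ∖ I`, the condition `ι(PQ) ≤ R` splits into
`ι(P) ≤ R ∖ I` and `ι(Q) ≤ I`; and since every element of `P` is `r`-below every element of `Q`
in `PQ`, `φ(PQ, R) = φ(P, R ∖ I) + φ(Q, I) + h_{R∖I}^I`.

Symmetry: `φ` is symmetric by definition, and when `P` and `Q` induce the same total order,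
`ι(P) ≤ Q` forces `ι(Q) ≤ P`, because `x <_h y` and `x <_r y` exclude each other. -/

namespace PlanePoset

variable {α β : Type}

theorem ext {P Q : PlanePoset α} (hh : P.hle = Q.hle) (hr : P.rle = Q.rle) : P = Q := by
  cases P; cases Q; cases hh; cases hr; rfl

def comap (P : PlanePoset α) (f : β ↪ α) : PlanePoset β where
  hle x y := P.hle (f x) (f y)
  rle x y := P.rle (f x) (f y)
  hle_refl _ := P.hle_refl _
  hle_antisymm _ _ h1 h2 := f.injective (P.hle_antisymm _ _ h1 h2)
  hle_trans _ _ _ h1 h2 := P.hle_trans _ _ _ h1 h2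
  rle_refl _ := P.rle_refl _
  rle_antisymm _ _ h1 h2 := f.injective (P.rle_antisymm _ _ h1 h2)
  rle_trans _ _ _ h1 h2 := P.rle_trans _ _ _ h1 h2
  compat _ _ hxy := P.compat _ _ fun h => hxy (f.injective h)

@[simp] theorem map_symm_map (e : α ≃ β) (P : PlanePoset α) : (P.map e).map e.symm = P :=
  ext (by ext; simp) (by ext; simp)

/-- `ι(P) ≤ Q`, for plane posets on a common carrier. -/
def SwapLE (P Q : PlanePoset α) : Prop := ∀ x y, Q.hle x y → P.rle x y

theorem SwapLE.symm {P Q : PlanePoset α} (htle : P.tle = Q.tle) (h : P.SwapLE Q) :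
    Q.SwapLE P := by
  intro x y hxy
  by_cases hne : x = y
  · exact hne ▸ Q.rle_refl x
  have hQ : Q.tle x y := htle ▸ Or.inl hxy
  exact hQ.resolve_left fun hQh => (P.compat x y hne).1 (Or.inl hxy) (Or.inl (h x y hQh))

theorem swapLE_map (e : α ≃ β) {P Q : PlanePoset α} :
    (P.map e).SwapLE (Q.map e) ↔ P.SwapLE Q :=
  ⟨fun h x y => by simpa using h (e x) (e y), fun h _ _ => h _ _⟩

theorem swapLE_comp_iff {P : PlanePoset α} {Q : PlanePoset β} {R : PlanePoset (α ⊕ β)}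
    (hR : ∀ a b, ¬ R.hle (.inr b) (.inl a)) :
    (P.comp Q).SwapLE R ↔ P.SwapLE (R.comap .inl) ∧ Q.SwapLE (R.comap .inr) := by
  refine ⟨fun h => ⟨fun a b => h _ _, fun a b => h _ _⟩, ?_⟩
  rintro ⟨hP, hQ⟩ (a | a) (b | b) h
  · exact hP a b h
  · trivial
  · exact (hR _ _ h).elim
  · exact hQ a b h

section Pairing

variable [Fintype α] [Fintype β] [DecidableEq α] [DecidableEq β]

noncomputable def phi (P Q : PlanePoset α) : ℕ :=
  (Finset.univ.filter (fun p : α × α =>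
      (P.rle p.1 p.2 ∧ p.1 ≠ p.2) ∧ (Q.hle p.1 p.2 ∧ p.1 ≠ p.2))).card +
  (Finset.univ.filter (fun p : α × α =>
      (P.hle p.1 p.2 ∧ p.1 ≠ p.2) ∧ (Q.rle p.1 p.2 ∧ p.1 ≠ p.2))).card

theorem phi_comm (P Q : PlanePoset α) : P.phi Q = Q.phi P := by
  rw [phi, phi, add_comm]
  congr 2 <;> ext <;> simp only [Finset.mem_filter] <;> tauto

theorem phi_map (e : α ≃ β) (P Q : PlanePoset α) : (P.map e).phi (Q.map e) = P.phi Q := by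
  unfold phi
  congr 1 <;> exact Finset.card_equiv (e.prodCongr e).symm (by simp)

theorem phi_comp (P : PlanePoset α) (Q : PlanePoset β) (R : PlanePoset (α ⊕ β)) :
    (P.comp Q).phi R = P.phi (R.comap .inl) + Q.phi (R.comap .inr) +
      (Finset.univ.filter fun p : α × β => R.hle (.inl p.1) (.inr p.2)).card := by
  simp only [phi, Finset.card_filter, Fintype.sum_prod_type, Fintype.sum_sum_type]
  simp only [comp, comap, ne_eq, Sum.inl.injEq, Sum.inr.injEq, reduceCtorEq, not_false_eq_true,
    and_self, and_true, true_and, false_and, ↓reduceIte, Finset.sum_boole, Nat.cast_id,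
    Finset.sum_const_zero, Finset.sum_add_distrib, zero_add, add_zero,
    Function.Embedding.inl_apply, Function.Embedding.inr_apply]
  ring

variable (K : Type) [Field K] (q : K)

noncomputable def pairing (P Q : PlanePoset α) : K :=
  if P.SwapLE Q then q ^ P.phi Q else 0

theorem pairing_comm {P Q : PlanePoset α} (htle : P.tle = Q.tle) :
    P.pairing K q Q = Q.pairing K q P := by
  rw [pairing, pairing, phi_comm]
  exact if_congr ⟨SwapLE.symm htle, SwapLE.symm htle.symm⟩ rfl rfl

theorem pairing_map_left (e : α ≃ β) (P : PlanePoset α) (Q : PlanePoset β) :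
    (P.map e).pairing K q Q = P.pairing K q (Q.map e.symm) := by
  conv_lhs => rw [← map_symm_map e.symm Q, Equiv.symm_symm]
  rw [pairing, pairing, phi_map, swapLE_map]

theorem pairing_comp (P : PlanePoset α) (Q : PlanePoset β) (R : PlanePoset (α ⊕ β))
    (hR : ∀ a b, ¬ R.hle (.inr b) (.inl a)) :
    (P.comp Q).pairing K q R =
      q ^ (Finset.univ.filter fun p : α × β => R.hle (.inl p.1) (.inr p.2)).card *
        (P.pairing K q (R.comap .inl) * Q.pairing K q (R.comap .inr)) := by
  simp only [pairing, swapLE_comp_iff hR, phi_comp]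
  rw [ite_and]
  split_ifs <;> ring

end Pairing

end PlanePoset

theorem Fin.castAdd_lt_natAdd {k l : ℕ} (a : Fin k) (b : Fin l) :
    Fin.castAdd l a < Fin.natAdd k b := by
  rw [Fin.lt_def, Fin.val_castAdd, Fin.val_natAdd]
  omega

namespace CanonPP

variable {n : ℕ}

theorem tle_eq (P : CanonPP n) : P.1.tle = (· ≤ ·) := funext₂ fun x y => propext (P.2 x y)

theorem not_hle_natAdd_castAdd {k l : ℕ} (R : CanonPP (k + l)) (a : Fin k) (b : Fin l) :
    ¬ R.1.hle (Fin.natAdd k b) (Fin.castAdd l a) := fun h =>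
  (Fin.castAdd_lt_natAdd a b).not_ge ((R.2 _ _).1 (Or.inl h))

theorem restrict_map_finCongr {m c : ℕ} (R : CanonPP m) {s : Finset (Fin m)} (h : s.card = c)
    (f : Fin c ↪ Fin m) (hfs : ∀ i, f i ∈ s) (hf : StrictMono f) :
    (R.restrict s).1.map (finCongr h) = R.1.comap f := by
  subst h
  have hf' := Finset.orderEmbOfFin_unique rfl hfs hf
  refine PlanePoset.ext ?_ ?_ <;> ext x y <;>
    simp [restrict, PlanePoset.res, PlanePoset.comap, hf', Finset.coe_orderIsoOfFin_apply]

end CanonPP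

section CanonicalPairing

variable (K : Type) [Field K] (q : K)

theorem pairN_eq_pairing {n : ℕ} (P Q : CanonPP n) : pairN K q P Q = P.1.pairing K q Q.1 := rfl

theorem pairPP_mk {a : ℕ} (P S : CanonPP a) : pairPP K q ⟨a, P⟩ ⟨a, S⟩ = P.1.pairing K q S.1 :=
  dif_pos rfl

theorem pairPP_of_card_eq {a b : ℕ} (h : b = a) (P : CanonPP a) (S : CanonPP b) :
    pairPP K q ⟨a, P⟩ ⟨b, S⟩ = P.1.pairing K q (S.1.map (finCongr h)) := by
  subst h
  exact pairPP_mk K q P S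

theorem pairPP_of_card_ne {a b : ℕ} (h : a ≠ b) (P : CanonPP a) (S : CanonPP b) :
    pairPP K q ⟨a, P⟩ ⟨b, S⟩ = 0 := dif_neg h

theorem pairPP_comm (P Q : PPS) : pairPP K q P Q = pairPP K q Q P := by
  obtain ⟨a, P⟩ := P
  obtain ⟨b, Q⟩ := Q
  by_cases h : a = b
  · subst h
    rw [pairPP_mk, pairPP_mk, PlanePoset.pairing_comm K q (by rw [P.tle_eq, Q.tle_eq])]
  · rw [pairPP_of_card_ne K q h, pairPP_of_card_ne K q (Ne.symm h)]

end CanonicalPairing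

section Blocks

variable {k l : ℕ}

def upperBlock (k l : ℕ) : Finset (Fin (k + l)) := Finset.univ.map (Fin.natAddEmb k)

theorem natAdd_mem_upperBlock (b : Fin l) : Fin.natAdd k b ∈ upperBlock k l :=
  Finset.mem_map_of_mem _ (Finset.mem_univ b)

theorem card_upperBlock : (upperBlock k l).card = l := by
  simp [upperBlock]

theorem card_compl_upperBlock : (upperBlock k l)ᶜ.card = k := by
  rw [Finset.card_compl, card_upperBlock, Fintype.card_fin, Nat.add_sub_cancel]

theorem castAdd_mem_compl_upperBlock (a : Fin k) : Fin.castAdd l a ∈ (upperBlock k l)ᶜ :=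
  Finset.mem_compl.2 fun h => by
    obtain ⟨b, -, hb⟩ := Finset.mem_map.1 h
    exact (Fin.castAdd_lt_natAdd a b).ne hb.symm

theorem compl_upperBlock : (upperBlock k l)ᶜ = Finset.univ.map (Fin.castAddEmb l) :=
  (Finset.eq_of_subset_of_card_le
    (fun x hx => by
      obtain ⟨a, -, rfl⟩ := Finset.mem_map.1 hx
      exact castAdd_mem_compl_upperBlock a)
    (by simp [card_compl_upperBlock])).symm

theorem isBiideal_upperBlock (R : CanonPP (k + l)) : IsBiideal R (upperBlock k l) := by
  intro x y hx hxy
  obtain ⟨b, -, rfl⟩ := Finset.mem_map.1 hx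
  obtain ⟨c, rfl⟩ : y ∈ Set.range (Fin.natAdd k) := by
    rw [Fin.range_natAdd]
    exact (Fin.le_coe_natAdd k b).trans (Fin.le_def.1 ((R.2 _ _).1 hxy))
  exact natAdd_mem_upperBlock c

theorem IsBiideal.isUpperSet {n : ℕ} {R : CanonPP n} {I : Finset (Fin n)}
    (hI : IsBiideal R I) : IsUpperSet (I : Set (Fin n)) :=
  fun x y hxy hx => hI x y hx ((R.2 x y).2 hxy)

theorem IsBiideal.eq_of_card_eq {n : ℕ} {R : CanonPP n} {I J : Finset (Fin n)}
    (hI : IsBiideal R I) (hJ : IsBiideal R J) (hc : I.card = J.card) : I = J := by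
  rcases hI.isUpperSet.total hJ.isUpperSet with h | h
  · exact Finset.eq_of_subset_of_card_le (Finset.coe_subset.1 h) hc.ge
  · exact (Finset.eq_of_subset_of_card_le (Finset.coe_subset.1 h) hc.le).symm

theorem hNum_compl_upperBlock (R : CanonPP (k + l)) :
    hNum R (upperBlock k l)ᶜ (upperBlock k l) =
      (Finset.univ.filter fun p : Fin k × Fin l =>
        R.1.hle (Fin.castAdd l p.1) (Fin.natAdd k p.2)).card := by
  rw [hNum, compl_upperBlock, upperBlock, ← Finset.prodMap_map_product, Finset.filter_map,
    Finset.card_map, Finset.univ_product_univ]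
  congr 1
  ext ⟨a, b⟩
  simp only [Finset.mem_filter, Finset.mem_univ, true_and, Function.comp_apply]
  exact and_iff_left (Fin.castAdd_lt_natAdd a b).ne

end Blocks

section Hopf

variable (K : Type) [Field K] (q : K) {k l : ℕ}

theorem pairN_comp (P : CanonPP k) (Q : CanonPP l) (R : CanonPP (k + l)) :
    pairN K q (P.comp Q) R = q ^ hNum R (upperBlock k l)ᶜ (upperBlock k l) *
      (pairPP K q ⟨k, P⟩ ⟨_, R.restrict (upperBlock k l)ᶜ⟩ *
        pairPP K q ⟨l, Q⟩ ⟨_, R.restrict (upperBlock k l)⟩) := by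
  rw [pairPP_of_card_eq K q card_compl_upperBlock, pairPP_of_card_eq K q card_upperBlock,
    R.restrict_map_finCongr _ (Fin.castAddEmb l) castAdd_mem_compl_upperBlock
      (Fin.strictMono_castAdd l),
    R.restrict_map_finCongr _ (Fin.natAddEmb k) natAdd_mem_upperBlock (Fin.strictMono_natAdd k),
    hNum_compl_upperBlock, pairN_eq_pairing]
  show ((P.1.comp Q.1).map finSumFinEquiv).pairing K q R.1 = _
  rw [PlanePoset.pairing_map_left, PlanePoset.pairing_comp]
  · -- `finSumFinEquiv` sends `inl a`, `inr b` to `castAdd l a`, `natAdd k b` by definition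
    rfl
  · exact R.not_hle_natAdd_castAdd

theorem pairPP_comp (m : ℕ) (P : CanonPP k) (Q : CanonPP l) (R : CanonPP m) :
    pairPP K q ⟨k + l, P.comp Q⟩ ⟨m, R⟩ =
      ∑ I ∈ Finset.univ.filter (fun I : Finset (Fin m) => IsBiideal R I),
        q ^ hNum R Iᶜ I * (pairPP K q ⟨k, P⟩ ⟨Iᶜ.card, R.restrict Iᶜ⟩ *
          pairPP K q ⟨l, Q⟩ ⟨I.card, R.restrict I⟩) := by
  by_cases hm : k + l = m
  · subst hm
    have hmem : upperBlock k l ∈ Finset.univ.filter (IsBiideal R) :=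
      Finset.mem_filter.2 ⟨Finset.mem_univ _, isBiideal_upperBlock R⟩
    rw [pairPP_mk, ← pairN_eq_pairing, pairN_comp, Finset.sum_eq_single_of_mem _ hmem]
    intro I hI hne
    have hcard : l ≠ I.card := fun h => hne <| (Finset.mem_filter.1 hI).2.eq_of_card_eq
      (isBiideal_upperBlock R) (card_upperBlock.trans h).symm
    rw [pairPP_of_card_ne K q hcard, mul_zero, mul_zero]
  · rw [pairPP_of_card_ne K q hm]
    refine (Finset.sum_eq_zero fun I _ => ?_).symm
    have hcard : I.card + Iᶜ.card = m := by rw [Finset.card_add_card_compl, Fintype.card_fin]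
    by_cases hk : k = Iᶜ.card
    · rw [pairPP_of_card_ne K q (a := l) (by omega), mul_zero, mul_zero]
    · rw [pairPP_of_card_ne K q hk, zero_mul, mul_zero]

end Hopf

/-- The pairing `⟨−,−⟩_q` is symmetric, and satisfies the Hopf
compatibility with the composition product and the coproduct `Δ_q`:
`⟨PQ, R⟩_q = Σ_{I biideal of R} q^{h_{R∖I}^I} ⟨P, R∖I⟩_q ⟨Q, I⟩_q`. -/
theorem statement15 (K : Type) [Field K] (q : K) :
    (∀ P Q : PPS, pairPP K q P Q = pairPP K q Q P) ∧
    (∀ (k l m : ℕ) (P : CanonPP k) (Q : CanonPP l) (R : CanonPP m),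
      pairPP K q (⟨k + l, P.comp Q⟩ : PPS) (⟨m, R⟩ : PPS) =
        ∑ I ∈ Finset.univ.filter (fun I : Finset (Fin m) => IsBiideal R I),
          q ^ hNum R Iᶜ I *
            (pairPP K q (⟨k, P⟩ : PPS) (⟨Iᶜ.card, R.restrict Iᶜ⟩ : PPS) *
              pairPP K q (⟨l, Q⟩ : PPS) (⟨I.card, R.restrict I⟩ : PPS))) :=
  ⟨pairPP_comm K q, fun _ _ => pairPP_comp K q⟩
end

section
/- Let q ∈ K. The symmetric bilinear pairing on the K-vector space h_PP with basis the plane posets, given on basis elements by ⟨P,Q⟩_q = q^{φ(P,Q)} if ι(P) ≤ Q and 0 otherwise, is nondegenerate if, and only if, q ≠ 0. In particular, for q ≠ 0, for every nonzero linear combination x of plane posets of cardinality n there exists a plane poset Q of cardinality n with ⟨x,Q⟩_q ≠ 0, and for q = 0 the pairing is degenerate. -/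
/-!
For `q = 0`, a plane poset `P` with a pair `x <_h y` pairs to zero with everything: `ι(P) ≤ Q`
forces `x <_r y` in `Q`, so `φ(P, Q) ≥ 1`. For `q ≠ 0` the pairing is triangular with respect
to the level `ℓ(P) = #{x <_r y}`: `⟨A, ι(P)⟩_q ≠ 0` forces the `r`-pairs of `P` to be `r`-pairs
of `A`, so if `P` has maximal level in the support of `x`, then `⟨x, ι(P)⟩_q = x_P q^{φ(P, ι(P))}`.
-/

open scoped TensorProduct
open scoped Classical

noncomputable section

namespace CanonPP

variable {n : ℕ}

theorem hle_iff_of_ne (P : CanonPP n) {x y : Fin n} (hxy : x ≠ y) :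
    P.1.hle x y ↔ x ≤ y ∧ ¬ P.1.rle x y := by
  refine ⟨fun h => ⟨(P.2 x y).1 (Or.inl h), fun hr => ?_⟩,
    fun ⟨hle, hnr⟩ => ((P.2 x y).2 hle).resolve_right hnr⟩
  exact (P.1.compat x y hxy).1 (Or.inl h) (Or.inl hr)

theorem ext_of_rle {P Q : CanonPP n} (h : ∀ x y, P.1.rle x y ↔ Q.1.rle x y) : P = Q := by
  have hh : ∀ x y, P.1.hle x y ↔ Q.1.hle x y := by
    intro x y
    by_cases hxy : x = y
    · subst hxy
      exact iff_of_true (P.1.hle_refl x) (Q.1.hle_refl x)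
    · rw [hle_iff_of_ne P hxy, hle_iff_of_ne Q hxy, h]
  obtain ⟨⟨hP, rP⟩, _⟩ := P
  obtain ⟨⟨hQ, rQ⟩, _⟩ := Q
  obtain rfl : hP = hQ := funext₂ fun x y => propext (hh x y)
  obtain rfl : rP = rQ := funext₂ fun x y => propext (h x y)
  rfl

/-- `ι P ≤ ι Q` says that every `r`-comparable pair of `Q` is `r`-comparable in `P`; with
`ℓ(P) ≤ ℓ(Q)` the two sets of `r`-pairs must then coincide. -/
theorem eq_of_PPle_iota_of_level_le {P Q : CanonPP n} (h : PPle P.iota Q.iota)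
    (hl : level P ≤ level Q) : P = Q := by
  have hsub : Finset.univ.filter (fun p : Fin n × Fin n => Q.1.rle p.1 p.2 ∧ p.1 ≠ p.2) ⊆
      Finset.univ.filter (fun p : Fin n × Fin n => P.1.rle p.1 p.2 ∧ p.1 ≠ p.2) :=
    fun p hp => by
      simp only [Finset.mem_filter] at hp ⊢
      exact ⟨hp.1, h _ _ hp.2.1, hp.2.2⟩
  have heq := Finset.eq_of_subset_of_card_le hsub hl
  refine (ext_of_rle fun x y => ?_).symm
  by_cases hxy : x = y
  · subst hxy
    exact iff_of_true (Q.1.rle_refl x) (P.1.rle_refl x)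
  · simpa [hxy] using congrArg ((x, y) ∈ ·) heq

theorem phi_ne_zero_of_PPle_iota {P Q : CanonPP n} (h : PPle P.iota Q) {x y : Fin n}
    (hxy : P.1.hle x y) (hne : x ≠ y) : phi P Q ≠ 0 := by
  have hQ : Q.1.rle x y :=
    ((Q.2 x y).2 ((P.2 x y).1 (Or.inl hxy))).resolve_left fun hQ =>
      (P.1.compat x y hne).1 (Or.inl hxy) (Or.inl (h x y hQ))
  have hmem : (x, y) ∈ Finset.univ.filter (fun p : Fin n × Fin n =>
      (P.1.hle p.1 p.2 ∧ p.1 ≠ p.2) ∧ (Q.1.rle p.1 p.2 ∧ p.1 ≠ p.2)) := by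
    simp [hxy, hQ, hne]
  have := Finset.card_pos.2 ⟨_, hmem⟩
  unfold phi
  omega

end CanonPP

def PPS.iota (P : PPS) : PPS := ⟨P.1, P.2.iota⟩

section Pairing

variable {K : Type} [Field K] {q : K}

theorem pairPP_mk_s16 {n : ℕ} (P Q : CanonPP n) : pairPP K q ⟨n, P⟩ ⟨n, Q⟩ = pairN K q P Q := by
  simp [pairPP]

theorem pairPP_of_card_ne_s16 {P Q : PPS} (h : P.1 ≠ Q.1) : pairPP K q P Q = 0 := dif_neg h

theorem pairPP_zero_eq_zero_of_hle {P : PPS} {x y : Fin P.1} (hxy : P.2.1.hle x y)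
    (hne : x ≠ y) (Q : PPS) : pairPP K 0 P Q = 0 := by
  obtain ⟨n, P⟩ := P
  obtain ⟨m, Q⟩ := Q
  by_cases hnm : n = m
  · subst hnm
    rw [pairPP_mk_s16, pairN]
    split_ifs with h
    · exact zero_pow (CanonPP.phi_ne_zero_of_PPle_iota h hxy hne)
    · rfl
  · exact pairPP_of_card_ne_s16 hnm

theorem pairPP_iota_self (P : PPS) : pairPP K q P P.iota = q ^ phi P.2 P.2.iota := by
  rw [PPS.iota, pairPP_mk_s16, pairN, if_pos (show PPle P.2.iota P.2.iota from fun _ _ h => h)]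

theorem pairPP_iota_eq_zero_of_level_le {P Q : PPS} (hne : P ≠ Q)
    (hl : level P.2 ≤ level Q.2) : pairPP K q P Q.iota = 0 := by
  obtain ⟨n, P⟩ := P
  obtain ⟨m, Q⟩ := Q
  by_cases hnm : n = m
  · subst hnm
    rw [PPS.iota, pairPP_mk_s16, pairN, if_neg]
    exact fun h => hne (congrArg _ (CanonPP.eq_of_PPle_iota_of_level_le h hl))
  · exact pairPP_of_card_ne_s16 hnm

theorem Bform_single_left (P : PPS) (y : PPS →₀ K) :
    Bform K q (Finsupp.single P 1) y = y.sum fun Q d => d * pairPP K q P Q := by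
  simp [Bform, Finsupp.lift_apply]

theorem Bform_single_right (x : PPS →₀ K) (Q : PPS) :
    Bform K q x (Finsupp.single Q 1) = x.sum fun P c => c * pairPP K q P Q := by
  simp [Bform, Finsupp.lift_apply]

theorem Bform_zero_single_eq_zero {P : PPS} {x y : Fin P.1} (hxy : P.2.1.hle x y)
    (hne : x ≠ y) (z : PPS →₀ K) : Bform K 0 (Finsupp.single P 1) z = 0 := by
  rw [Bform_single_left]
  exact Finset.sum_eq_zero fun Q _ => by simp only [pairPP_zero_eq_zero_of_hle hxy hne, mul_zero]

theorem exists_Bform_ne_zero (hq : q ≠ 0) {x : PPS →₀ K} (hx : x ≠ 0) :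
    ∃ y, Bform K q x y ≠ 0 := by
  obtain ⟨P, hP, hmax⟩ := x.support.exists_max_image (fun P : PPS => level P.2)
    (Finsupp.support_nonempty_iff.2 hx)
  refine ⟨Finsupp.single P.iota 1, ?_⟩
  rw [Bform_single_right, Finsupp.sum, Finset.sum_eq_single_of_mem P hP fun A hA hne => by
    rw [pairPP_iota_eq_zero_of_level_le hne (hmax A hA), mul_zero], pairPP_iota_self]
  exact mul_ne_zero (Finsupp.mem_support_iff.1 hP) (pow_ne_zero _ hq)

end Pairing

/-- The symmetric bilinear pairing `⟨−,−⟩_q` on `h_PP` is nondegenerate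
if and only if `q ≠ 0`. -/
theorem statement16 (K : Type) [Field K] (q : K) :
    (∀ x : PPS →₀ K, (∀ y : PPS →₀ K, Bform K q x y = 0) → x = 0) ↔ q ≠ 0 := by
  refine ⟨fun hnd hq => ?_, fun hq x hx => ?_⟩
  · subst hq
    have hchain : (PsiPerm (1 : Equiv.Perm (Fin 2))).1.hle 0 1 :=
      ⟨Fin.zero_le _, Fin.zero_le _⟩
    have := hnd _ (Bform_zero_single_eq_zero (P := ⟨2, PsiPerm 1⟩) hchain (by decide))
    exact one_ne_zero (Finsupp.single_eq_zero.1 this)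
  · by_contra hx0
    obtain ⟨y, hy⟩ := exists_Bform_ne_zero hq hx0
    exact hy (hx y)
end
end

section
/- Let P and Q be plane posets of the same cardinality n with P ≤ Q. Then every path in the Hasse graph of the poset (PP(n), ≤) from P to Q has length ℓ(Q) − ℓ(P); that is, for every chain P = P_0 ⋖ P_1 ⋖ … ⋖ P_k = Q of covering relations in (PP(n), ≤), one has k = ℓ(Q) − ℓ(P). -/
open scoped TensorProduct
open scoped Classical

section Statement18Aux

namespace S18

variable {n : ℕ}

lemma hle_le (P : CanonPP n) {x y : Fin n} (h : P.1.hle x y) : x ≤ y :=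
  (P.2 x y).1 (Or.inl h)

lemma rle_le (P : CanonPP n) {x y : Fin n} (h : P.1.rle x y) : x ≤ y :=
  (P.2 x y).1 (Or.inr h)

lemma not_both (P : CanonPP n) {x y : Fin n} (hxy : x ≠ y)
    (h1 : P.1.hle x y) (h2 : P.1.rle x y) : False :=
  ((P.1.compat x y hxy).1 (Or.inl h1)) (Or.inl h2)

lemma rle_of_not_hle (P : CanonPP n) {x y : Fin n} (h : x ≤ y)
    (h2 : ¬ P.1.hle x y) : P.1.rle x y := ((P.2 x y).2 h).resolve_left h2

lemma hle_of_not_rle (P : CanonPP n) {x y : Fin n} (h : x ≤ y)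
    (h2 : ¬ P.1.rle x y) : P.1.hle x y := ((P.2 x y).2 h).resolve_right h2

/-- The "word order" of a plane poset (the position order of the associated permutation). -/
def wlt (P : CanonPP n) (x y : Fin n) : Prop :=
  (x < y ∧ P.1.hle x y) ∨ (y < x ∧ P.1.rle y x)

lemma wlt_irrefl (P : CanonPP n) (x : Fin n) : ¬ wlt P x x := by
  rintro (⟨h, -⟩ | ⟨h, -⟩) <;> exact lt_irrefl x h

lemma wlt_trans (P : CanonPP n) {x y z : Fin n} (h1 : wlt P x y) (h2 : wlt P y z) :
    wlt P x z := by
  rcases h1 with ⟨hxy, hh1⟩ | ⟨hyx, hr1⟩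
  · rcases h2 with ⟨hyz, hh2⟩ | ⟨hzy, hr2⟩
    · exact Or.inl ⟨hxy.trans hyz, P.1.hle_trans _ _ _ hh1 hh2⟩
    · have hxz : x ≠ z := by rintro rfl; exact not_both P hxy.ne hh1 hr2
      rcases hxz.lt_or_gt with h | h
      · refine Or.inl ⟨h, ?_⟩
        by_contra hc
        exact not_both P hxy.ne hh1 (P.1.rle_trans _ _ _ (rle_of_not_hle P h.le hc) hr2)
      · refine Or.inr ⟨h, ?_⟩
        by_contra hc
        exact not_both P hzy.ne (P.1.hle_trans _ _ _ (hle_of_not_rle P h.le hc) hh1) hr2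
  · rcases h2 with ⟨hyz, hh2⟩ | ⟨hzy, hr2⟩
    · have hxz : x ≠ z := by rintro rfl; exact not_both P hyx.ne hh2 hr1
      rcases hxz.lt_or_gt with h | h
      · refine Or.inl ⟨h, ?_⟩
        by_contra hc
        exact not_both P hyz.ne hh2 (P.1.rle_trans _ _ _ hr1 (rle_of_not_hle P h.le hc))
      · refine Or.inr ⟨h, ?_⟩
        by_contra hc
        exact not_both P hyx.ne (P.1.hle_trans _ _ _ hh2 (hle_of_not_rle P h.le hc)) hr1
    · exact Or.inr ⟨hzy.trans hyx, P.1.rle_trans _ _ _ hr2 hr1⟩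

/-- Elements strictly between `a` and `b` in the word order. -/
noncomputable def betw (P : CanonPP n) (a b : Fin n) : Finset (Fin n) :=
  Finset.univ.filter (fun z => wlt P a z ∧ wlt P z b)

lemma mem_betw {P : CanonPP n} {a b z : Fin n} :
    z ∈ betw P a b ↔ wlt P a z ∧ wlt P z b := by simp [betw]

lemma planePoset_ext {α : Type} {P Q : PlanePoset α} (h1 : P.hle = Q.hle)
    (h2 : P.rle = Q.rle) : P = Q := by
  cases P; cases Q
  simp only at h1 h2
  subst h1; subst h2
  rfl

/-- The plane poset obtained from `R` by turning the `≤_h`-adjacent pair `(a,b)`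
into an `≤_r` pair. -/
noncomputable def stepPP (R : CanonPP n) (a b : Fin n) (hab : a < b) (hRab : R.1.hle a b)
    (hadj : ∀ z, wlt R a z → wlt R z b → False) : CanonPP n :=
  ⟨{ hle := fun x y => R.1.hle x y ∧ ¬(x = a ∧ y = b)
     rle := fun x y => R.1.rle x y ∨ (x = a ∧ y = b)
     hle_refl := fun x => ⟨R.1.hle_refl x, by rintro ⟨rfl, rfl⟩; exact hab.ne rfl⟩
     hle_antisymm := fun x y h1 h2 => R.1.hle_antisymm x y h1.1 h2.1
     hle_trans := by
       rintro x y z ⟨h1, h1'⟩ ⟨h2, h2'⟩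
       refine ⟨R.1.hle_trans _ _ _ h1 h2, ?_⟩
       rintro ⟨hxe, hze⟩
       rw [hxe] at h1
       rw [hze] at h2
       have hyb : y ≠ b := fun e => h1' ⟨hxe, e⟩
       have hya : y ≠ a := fun e => h2' ⟨e, hze⟩
       exact hadj y (Or.inl ⟨lt_of_le_of_ne (hle_le R h1) (Ne.symm hya), h1⟩)
         (Or.inl ⟨lt_of_le_of_ne (hle_le R h2) hyb, h2⟩)
     rle_refl := fun x => Or.inl (R.1.rle_refl x)
     rle_antisymm := by
       intro x y h1 h2
       rcases h1 with h1 | ⟨e1, e2⟩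
       · rcases h2 with h2 | ⟨f1, f2⟩
         · exact R.1.rle_antisymm x y h1 h2
         · rw [f1, f2] at h1
           exact absurd (rle_le R h1) (not_le.2 hab)
       · rcases h2 with h2 | ⟨f1, f2⟩
         · rw [e2, e1] at h2
           exact absurd (rle_le R h2) (not_le.2 hab)
         · exact absurd (e2.symm.trans f1) hab.ne'
     rle_trans := by
       intro x y z h1 h2
       rcases h1 with h1 | ⟨e1, e2⟩
       · rcases h2 with h2 | ⟨f1, f2⟩
         · exact Or.inl (R.1.rle_trans _ _ _ h1 h2)
         · rw [f1] at h1
           by_cases hx : x = a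
           · exact Or.inr ⟨hx, f2⟩
           · refine Or.inl ?_
             rw [f2]
             by_contra hc
             have hxa : x < a := lt_of_le_of_ne (rle_le R h1) hx
             have hxb : x < b := hxa.trans hab
             exact hadj x (Or.inr ⟨hxa, h1⟩) (Or.inl ⟨hxb, hle_of_not_rle R hxb.le hc⟩)
       · rcases h2 with h2 | ⟨f1, f2⟩
         · rw [e2] at h2
           by_cases hz : z = b
           · exact Or.inr ⟨e1, hz⟩
           · refine Or.inl ?_
             rw [e1]
             by_contra hc
             have hbz : b < z := lt_of_le_of_ne (rle_le R h2) (Ne.symm hz)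
             have haz : a < z := hab.trans hbz
             exact hadj z (Or.inl ⟨haz, hle_of_not_rle R haz.le hc⟩) (Or.inr ⟨hbz, h2⟩)
         · exact absurd (e2.symm.trans f1) hab.ne'
     compat := by
       intro x y hxy
       by_cases h1 : x = a ∧ y = b
       · obtain ⟨e1, e2⟩ := h1
         constructor
         · rintro (⟨-, hc⟩ | ⟨h, -⟩)
           · exact (hc ⟨e1, e2⟩).elim
           · rw [e2, e1] at h
             exact absurd (hle_le R h) (not_le.2 hab)
         · intro hc
           exact (hc (Or.inl (Or.inr ⟨e1, e2⟩))).elim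
       · by_cases h2 : y = a ∧ x = b
         · obtain ⟨e1, e2⟩ := h2
           constructor
           · rintro (⟨h, -⟩ | ⟨-, hc⟩)
             · rw [e2, e1] at h
               exact absurd (hle_le R h) (not_le.2 hab)
             · exact (hc ⟨e1, e2⟩).elim
           · intro hc
             exact (hc (Or.inr (Or.inr ⟨e1, e2⟩))).elim
         · have hc := R.1.compat x y hxy
           constructor
           · rintro (⟨h, -⟩ | ⟨h, -⟩) <;> intro hr
             · rcases hr with (hr | he) | (hr | he)
               · exact (hc.1 (Or.inl h)) (Or.inl hr)
               · exact h1 he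
               · exact (hc.1 (Or.inl h)) (Or.inr hr)
               · exact h2 he
             · rcases hr with (hr | he) | (hr | he)
               · exact (hc.1 (Or.inr h)) (Or.inl hr)
               · exact h1 he
               · exact (hc.1 (Or.inr h)) (Or.inr hr)
               · exact h2 he
           · intro hr
             have hr' : ¬(R.1.rle x y ∨ R.1.rle y x) := by
               rintro (h | h)
               · exact hr (Or.inl (Or.inl h))
               · exact hr (Or.inr (Or.inl h))
             rcases hc.2 hr' with h | h
             · exact Or.inl ⟨h, h1⟩
             · exact Or.inr ⟨h, h2⟩ },
   by
     intro x y
     by_cases h : x = a ∧ y = b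
     · obtain ⟨e1, e2⟩ := h
       refine ⟨fun _ => ?_, fun _ => Or.inr (Or.inr ⟨e1, e2⟩)⟩
       rw [e1, e2]
       exact hab.le
     · rw [← R.2 x y]
       constructor
       · rintro (⟨hh, -⟩ | (hr | he))
         · exact Or.inl hh
         · exact Or.inr hr
         · exact absurd he h
       · rintro (hh | hr)
         · exact Or.inl ⟨hh, h⟩
         · exact Or.inr (Or.inl hr)⟩

lemma exists_step (R S : CanonPP n) (hRS : PPlt R S) :
    ∃ T : CanonPP n, PPlt R T ∧ PPle T S ∧ level T = level R + 1 := by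
  classical
  set D : Finset (Fin n × Fin n) :=
    Finset.univ.filter (fun p => p.1 < p.2 ∧ R.1.hle p.1 p.2 ∧ S.1.rle p.1 p.2) with hDdef
  have hD : D.Nonempty := by
    rw [Finset.nonempty_iff_ne_empty]
    intro hempty
    apply hRS.2
    have hnot : ∀ x y : Fin n, ¬(x < y ∧ R.1.hle x y ∧ S.1.rle x y) := by
      intro x y hxy
      have : (x, y) ∈ D := by
        simp only [hDdef, Finset.mem_filter, Finset.mem_univ, true_and]
        exact hxy
      rw [hempty] at this
      exact absurd this (Finset.notMem_empty _)
    apply Subtype.ext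
    apply planePoset_ext
    · funext x y
      apply propext
      constructor
      · intro h
        by_cases hxy : x = y
        · subst hxy; exact S.1.hle_refl x
        · have hlt : x < y := lt_of_le_of_ne (hle_le R h) hxy
          by_contra hc
          exact hnot x y ⟨hlt, h, rle_of_not_hle S hlt.le hc⟩
      · exact hRS.1 x y
    · funext x y
      apply propext
      constructor
      · intro h
        by_cases hxy : x = y
        · subst hxy; exact S.1.rle_refl x
        · have hlt : x < y := lt_of_le_of_ne (rle_le R h) hxy
          have : ¬ S.1.hle x y := fun hs => not_both R hxy (hRS.1 x y hs) h
          exact rle_of_not_hle S hlt.le this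
      · intro h
        by_cases hxy : x = y
        · subst hxy; exact R.1.rle_refl x
        · have hlt : x < y := lt_of_le_of_ne (rle_le S h) hxy
          by_contra hc
          exact hnot x y ⟨hlt, hle_of_not_rle R hlt.le hc, h⟩
  obtain ⟨p, hp, hmin⟩ := D.exists_min_image (fun p => (betw R p.1 p.2).card) hD
  obtain ⟨a, b⟩ := p
  simp only [hDdef, Finset.mem_filter, Finset.mem_univ, true_and] at hp
  obtain ⟨hab, hRab, hSab⟩ := hp
  have hadj : ∀ z, wlt R a z → wlt R z b → False := by
    intro z h1 h2
    have hzmem : z ∈ betw R a b := mem_betw.2 ⟨h1, h2⟩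
    have contra : ∀ u v : Fin n, u < v → R.1.hle u v → S.1.rle u v →
        betw R u v ⊆ betw R a b → z ∉ betw R u v → False := by
      intro u v h1' h2' h3' hsub hz
      have hq : (u, v) ∈ D := by
        simp only [hDdef, Finset.mem_filter, Finset.mem_univ, true_and]
        exact ⟨h1', h2', h3'⟩
      have hle' := hmin (u, v) hq
      have hlt : (betw R u v).card < (betw R a b).card :=
        Finset.card_lt_card ((Finset.ssubset_iff_of_subset hsub).2 ⟨z, hzmem, hz⟩)
      exact Nat.lt_irrefl _ (lt_of_lt_of_le hlt hle')
    have hza : z ≠ a := fun e => wlt_irrefl R a (e ▸ h1)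
    have hzb : z ≠ b := fun e => wlt_irrefl R b (e ▸ h2)
    rcases hza.lt_or_gt with hlt1 | hlt1
    · -- z < a
      have hr1 : R.1.rle z a := by
        rcases h1 with ⟨h, -⟩ | ⟨-, h⟩
        · exact absurd h (not_lt.2 hlt1.le)
        · exact h
      have hzb' : z < b := hlt1.trans hab
      have hh2 : R.1.hle z b := by
        rcases h2 with ⟨-, h⟩ | ⟨h, -⟩
        · exact h
        · exact absurd h (not_lt.2 hzb'.le)
      have hSza : S.1.rle z a := by
        have : ¬ S.1.hle z a := fun hs => not_both R hza (hRS.1 z a hs) hr1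
        exact rle_of_not_hle S hlt1.le this
      have hSzb : S.1.hle z b := by
        by_contra hc
        have hS : S.1.rle z b := rle_of_not_hle S hzb'.le hc
        refine contra z b hzb' hh2 hS ?_ (fun hm => wlt_irrefl R z (mem_betw.1 hm).1)
        intro w hw
        obtain ⟨hw1, hw2⟩ := mem_betw.1 hw
        exact mem_betw.2 ⟨wlt_trans R h1 hw1, hw2⟩
      exact not_both S hzb hSzb (S.1.rle_trans _ _ _ hSza hSab)
    · -- a < z
      have hh1 : R.1.hle a z := by
        rcases h1 with ⟨-, h⟩ | ⟨h, -⟩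
        · exact h
        · exact absurd h (not_lt.2 hlt1.le)
      have hSaz : S.1.hle a z := by
        by_contra hc
        have hS : S.1.rle a z := rle_of_not_hle S hlt1.le hc
        refine contra a z hlt1 hh1 hS ?_ (fun hm => wlt_irrefl R z (mem_betw.1 hm).2)
        intro w hw
        obtain ⟨hw1, hw2⟩ := mem_betw.1 hw
        exact mem_betw.2 ⟨hw1, wlt_trans R hw2 h2⟩
      rcases hzb.lt_or_gt with hlt2 | hlt2
      · -- z < b
        have hh2 : R.1.hle z b := by
          rcases h2 with ⟨-, h⟩ | ⟨h, -⟩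
          · exact h
          · exact absurd h (not_lt.2 hlt2.le)
        have hSzb : S.1.hle z b := by
          by_contra hc
          have hS : S.1.rle z b := rle_of_not_hle S hlt2.le hc
          refine contra z b hlt2 hh2 hS ?_ (fun hm => wlt_irrefl R z (mem_betw.1 hm).1)
          intro w hw
          obtain ⟨hw1, hw2⟩ := mem_betw.1 hw
          exact mem_betw.2 ⟨wlt_trans R h1 hw1, hw2⟩
        exact not_both S hab.ne (S.1.hle_trans _ _ _ hSaz hSzb) hSab
      · -- b < z
        have hr2 : R.1.rle b z := by
          rcases h2 with ⟨h, -⟩ | ⟨-, h⟩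
          · exact absurd h (not_lt.2 hlt2.le)
          · exact h
        have hSbz : S.1.rle b z := by
          have : ¬ S.1.hle b z := fun hs => not_both R hzb.symm (hRS.1 b z hs) hr2
          exact rle_of_not_hle S hlt2.le this
        exact not_both S (hab.trans hlt2).ne hSaz (S.1.rle_trans _ _ _ hSab hSbz)
  refine ⟨stepPP R a b hab hRab hadj, ⟨fun x y h => h.1, ?_⟩, ?_, ?_⟩
  · -- R ≠ stepPP
    intro h
    have : R.1.rle a b := by
      rw [h]
      exact Or.inr ⟨rfl, rfl⟩
    exact not_both R hab.ne hRab this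
  · -- PPle (stepPP ...) S
    intro x y hxy
    refine ⟨hRS.1 x y hxy, ?_⟩
    rintro ⟨e1, e2⟩
    rw [e1, e2] at hxy
    exact not_both S hab.ne hxy hSab
  · -- level
    unfold level
    have hset : Finset.univ.filter
          (fun p : Fin n × Fin n => (stepPP R a b hab hRab hadj).1.rle p.1 p.2 ∧ p.1 ≠ p.2)
        = insert (a, b)
            (Finset.univ.filter (fun p : Fin n × Fin n => R.1.rle p.1 p.2 ∧ p.1 ≠ p.2)) := by
      ext p
      simp only [Finset.mem_filter, Finset.mem_univ, true_and, Finset.mem_insert]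
      constructor
      · rintro ⟨hr | ⟨e1, e2⟩, hne⟩
        · exact Or.inr ⟨hr, hne⟩
        · exact Or.inl (Prod.ext e1 e2)
      · rintro (rfl | ⟨hr, hne⟩)
        · exact ⟨Or.inr ⟨rfl, rfl⟩, hab.ne⟩
        · exact ⟨Or.inl hr, hne⟩
    rw [hset, Finset.card_insert_of_notMem]
    intro hm
    exact not_both R hab.ne hRab (Finset.mem_filter.1 hm).2.1

lemma level_covby {R S : CanonPP n} (h : PPcovBy R S) : level S = level R + 1 := by
  obtain ⟨T, hRT, hTS, hlev⟩ := exists_step R S h.1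
  have hTS' : T = S := by
    by_contra hne
    exact h.2 T hRT ⟨hTS, hne⟩
  rw [← hTS']
  exact hlev

end S18

end Statement18Aux


/-- Let `P ≤ Q` in `PP(n)`. Every path from `P` to `Q` in the Hasse
graph of `(PP(n), ≤)` (i.e. every chain of covering relations) has length
`ℓ(Q) − ℓ(P)`. -/
theorem statement18 {n : ℕ} (P Q : CanonPP n) (hPQ : PPle P Q)
    (k : ℕ) (c : Fin (k + 1) → CanonPP n)
    (h0 : c 0 = P) (hlast : c (Fin.last k) = Q)
    (hcov : ∀ i : Fin k, PPcovBy (c i.castSucc) (c i.succ)) :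
    level P + k = level Q := by
  have key : ∀ i : Fin (k + 1), level (c i) = level P + i.val := by
    intro i
    induction i using Fin.induction with
    | zero => rw [h0]; simp
    | succ j ih =>
      have hc := S18.level_covby (hcov j)
      rw [hc, ih]
      simp [Fin.val_succ]
      omega
  have hk := key (Fin.last k)
  rw [hlast] at hk
  simp [Fin.val_last] at hk
  omega
end

section
/- Let P, Q be plane posets of the same cardinality n such that ι(P) ≤ Q. Then φ(P,Q) = n(n−1) − ℓ(P) − ℓ(Q), and hence ⟨P,Q⟩_q = q^{n(n−1) − ℓ(P) − ℓ(Q)}. -/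
open scoped TensorProduct
open scoped Classical

/-! If `ι(P) ≤ Q`, every strict `≤_h`-pair of `Q` is a `≤_r`-pair of `P`, and then every strict
`≤_h`-pair of `P` must be a `≤_r`-pair of `Q`; so `φ(P,Q)` counts exactly the strict `≤_h`-pairs
of `P` and of `Q`. In a plane poset each of the `n(n-1)/2` pairs `x < y` of the total order is
strict for exactly one of `≤_h`, `≤_r`, so these counts are `n(n-1)/2 - ℓ(P)` and
`n(n-1)/2 - ℓ(Q)`. -/

open Finset

theorem Finset.two_mul_card_filter_fst_lt_snd (α : Type*) [Fintype α] [LinearOrder α] :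
    2 * #{p : α × α | p.1 < p.2} = Fintype.card α * (Fintype.card α - 1) := by
  have hswap : #{p : α × α | p.2 < p.1} = #{p : α × α | p.1 < p.2} :=
    card_nbij' Prod.swap Prod.swap (fun _ hp => by simpa using hp) (fun _ hp => by simpa using hp)
      (fun _ _ => rfl) (fun _ _ => rfl)
  have hsplit : (univ : Finset α).offDiag =
      univ.filter (fun p : α × α => p.1 < p.2) ∪ univ.filter (fun p : α × α => p.2 < p.1) := by
    ext p
    simp [lt_or_lt_iff_ne]
  have hdisj : Disjoint (univ.filter fun p : α × α => p.1 < p.2)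
      (univ.filter fun p : α × α => p.2 < p.1) :=
    disjoint_filter.mpr fun _ _ h => h.not_gt
  have := offDiag_card (univ : Finset α)
  rw [hsplit, card_union_of_disjoint hdisj, hswap, card_univ] at this
  rw [Nat.mul_sub_one, ← this, two_mul]

theorem PlanePoset.not_rle_of_hle {α : Type} (P : PlanePoset α) {x y : α} (hne : x ≠ y)
    (h : P.hle x y) : ¬ P.rle x y :=
  fun h' => (P.compat x y hne).mp (Or.inl h) (Or.inl h')

namespace CanonPP

variable {n : ℕ} (P Q : CanonPP n)

theorem le_of_hle {x y : Fin n} (h : P.1.hle x y) : x ≤ y := (P.2 x y).mp (Or.inl h)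

theorem le_of_rle {x y : Fin n} (h : P.1.rle x y) : x ≤ y := (P.2 x y).mp (Or.inr h)

theorem hle_or_rle_of_le {x y : Fin n} (h : x ≤ y) : P.1.hle x y ∨ P.1.rle x y :=
  (P.2 x y).mpr h

theorem card_filter_hlt_add_level :
    #{p : Fin n × Fin n | P.1.hle p.1 p.2 ∧ p.1 ≠ p.2} + level P =
      #{p : Fin n × Fin n | p.1 < p.2} := by
  rw [level, ← card_union_of_disjoint]
  · congr 1
    ext p
    simp only [mem_union, mem_filter, mem_univ, true_and]
    constructor
    · rintro (⟨h, hne⟩ | ⟨h, hne⟩)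
      exacts [(P.le_of_hle h).lt_of_ne hne, (P.le_of_rle h).lt_of_ne hne]
    · intro hlt
      exact (P.hle_or_rle_of_le hlt.le).imp (⟨·, hlt.ne⟩) (⟨·, hlt.ne⟩)
  · exact disjoint_filter.mpr fun p _ hh hr => P.1.not_rle_of_hle hh.2 hh.1 hr.1

variable {P Q}

theorem rle_of_hle_of_iota_le (h : PPle P.iota Q) {x y : Fin n} (hne : x ≠ y)
    (hP : P.1.hle x y) : Q.1.rle x y :=
  (Q.hle_or_rle_of_le (P.le_of_hle hP)).resolve_left
    fun hQ => P.1.not_rle_of_hle hne hP (h x y hQ)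

theorem phi_eq_of_iota_le (h : PPle P.iota Q) :
    phi P Q = #{p : Fin n × Fin n | Q.1.hle p.1 p.2 ∧ p.1 ≠ p.2} +
      #{p : Fin n × Fin n | P.1.hle p.1 p.2 ∧ p.1 ≠ p.2} := by
  rw [phi]
  congr 1 <;> refine congrArg card (filter_congr fun p _ => ?_)
  · exact and_iff_right_of_imp fun hQ => ⟨h _ _ hQ.1, hQ.2⟩
  · exact and_iff_left_of_imp fun hP => ⟨rle_of_hle_of_iota_le h hP.2 hP.1, hP.2⟩

end CanonPP

/-- Let `P, Q ∈ PP(n)` with `ι(P) ≤ Q`. Then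
`φ(P,Q) = n(n−1) − ℓ(P) − ℓ(Q)`, and hence `⟨P,Q⟩_q = q^{n(n−1) − ℓ(P) − ℓ(Q)}`. -/
theorem statement19 (K : Type) [Field K] (q : K) {n : ℕ} (P Q : CanonPP n)
    (h : PPle (CanonPP.iota P) Q) :
    phi P Q + (level P + level Q) = n * (n - 1) ∧
      pairN K q P Q = q ^ (n * (n - 1) - level P - level Q) := by
  have hphi : phi P Q + (level P + level Q) = n * (n - 1) := by
    have hP := P.card_filter_hlt_add_level
    have hQ := Q.card_filter_hlt_add_level
    have hpairs := Finset.two_mul_card_filter_fst_lt_snd (Fin n)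
    rw [Fintype.card_fin] at hpairs
    rw [CanonPP.phi_eq_of_iota_le h]
    omega
  refine ⟨hphi, ?_⟩
  rw [pairN, if_pos h]
  congr 1
  omega
end
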